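/- arXiv:1704.07025 — 4 statements merged into one kernel-verified Lean document; each statement's English description precedes it below -/
import Mathlib

section
/- Let A be an m×n real matrix, B an m×p real matrix, b ∈ ℝ^m and c ∈ ℝ^n. Let S ⊆ ℝ^p be a set of parameters such that for every y ∈ S the feasible set {x ∈ ℝ^n : A x ≤ b + B y} is nonempty and the infimum J(y) := inf { ⟨c, x⟩ : A x ≤ b + B y } is finite and attained. Then there exists a nonempty finite family F of pairs (α, β) ∈ ℝ^p × ℝ such that for every y ∈ S, J(y) = max_{(α,β) ∈ F} ( ⟨α, y⟩ + β ). In particular, J is piecewise affine on S. -/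
/-!
For fixed `y`, `J y` is the value of a linear program whose dual, maximise `-(l ⬝ᵥ (b + B *ᵥ y))`
over `l ≥ 0` with `l ᵥ* A = -c`, has a feasible region independent of `y`. Strong duality (Farkas'
lemma, from separating a point from the cone spanned by the rows of `A`, which is closed by
Carathéodory's theorem) makes `J y` the dual optimum, and this optimum is attained at a basic
solution, one whose support indexes linearly independent rows. A basic solution is determined by
its support, so there are finitely many of them, and each contributes the affine function
`y ↦ -(l ⬝ᵥ (b + B *ᵥ y))`.
-/

open Matrix Function Set Filter Topology WithLp
open scoped InnerProductSpace

section Ring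

variable {ι R M : Type*} [Fintype ι] [Ring R] [AddCommGroup M] [Module R M] {v : ι → M}

theorem linearIndepOn_iff_of_fintype {s : Set ι} :
    LinearIndepOn R v s ↔ ∀ g : ι → R, support g ⊆ s → ∑ i, g i • v i = 0 → g = 0 := by
  classical
  have hsum : ∀ g : ι → R, ∀ t : Finset ι, (∀ i ∉ t, g i = 0) →
      ∑ i ∈ t, g i • v i = ∑ i, g i • v i := fun g t hg =>
    Finset.sum_subset t.subset_univ fun i _ hi => by simp [hg i hi]
  rw [linearIndepOn_iff'']
  refine ⟨fun h g hg h0 => funext fun i => ?_, fun h t g hts hg h0 i _ => ?_⟩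
  · by_contra hi
    have hs : ∀ j ∉ s.toFinset, g j = 0 := fun j hj => by
      by_contra hgj; exact hj (mem_toFinset.2 (hg hgj))
    exact hi (h s.toFinset g (by simp) hs (by rw [hsum g _ hs, h0]) i
      (mem_toFinset.2 (hg hi)))
  · exact congrFun (h g (fun j hj => hts (by by_contra hjt; exact hj (hg j hjt)))
      (by rw [← hsum g t hg, h0])) i

theorem finite_setOf_sum_smul_eq_linearIndepOn_support (v : ι → M) (u : M) :
    {l : ι → R | ∑ i, l i • v i = u ∧ LinearIndepOn R v (support l)}.Finite := by
  refine Set.Finite.of_finite_image (f := support) (toFinite _) ?_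
  rintro l ⟨hl, hind⟩ μ ⟨hμ, -⟩ hlμ
  refine sub_eq_zero.1 ((linearIndepOn_iff_of_fintype.1 hind) (l - μ) ?_ ?_)
  · exact (support_sub l μ).trans (union_subset subset_rfl hlμ.symm.subset)
  · simp [sub_smul, Finset.sum_sub_distrib, hl, hμ]

end Ring

section OrderedField

variable {ι 𝕜 E : Type*} [Fintype ι] [Field 𝕜] [LinearOrder 𝕜] [IsStrictOrderedRing 𝕜]
  [AddCommGroup E] [Module 𝕜 E] {v : ι → E}

theorem PointedCone.mem_hull_range_iff {x : E} :
    x ∈ PointedCone.hull 𝕜 (range v) ↔ ∃ l : ι → 𝕜, 0 ≤ l ∧ ∑ i, l i • v i = x := by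
  rw [Submodule.mem_span_range_iff_exists_fun]
  constructor
  · rintro ⟨l, rfl⟩
    exact ⟨fun i => l i, fun i => (l i).2, rfl⟩
  · rintro ⟨l, hl, rfl⟩
    exact ⟨fun i => ⟨l i, hl i⟩, rfl⟩

/-- The ratio test of the simplex method. -/
theorem exists_nonneg_sub_smul_eq_zero {l g : ι → 𝕜} (hl : 0 ≤ l) {j : ι} (hj : 0 < g j) :
    ∃ t : 𝕜, 0 ≤ l - t • g ∧ ∃ i, 0 < g i ∧ (l - t • g) i = 0 := by
  classical
  obtain ⟨i, hi, hmin⟩ := (Finset.univ.filter fun k => 0 < g k).exists_min_image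
    (fun k => l k / g k) ⟨j, by simpa using hj⟩
  simp only [Finset.mem_filter, Finset.mem_univ, true_and] at hi hmin
  refine ⟨l i / g i, fun k => ?_, i, hi, by simp [hi.ne']⟩
  have ht : 0 ≤ l i / g i := div_nonneg (hl i) hi.le
  simp only [Pi.zero_apply, Pi.sub_apply, Pi.smul_apply, smul_eq_mul, sub_nonneg]
  rcases le_or_gt (g k) 0 with hk | hk
  · exact (mul_nonpos_of_nonneg_of_nonpos ht hk).trans (hl k)
  · exact (le_div_iff₀ hk).1 (hmin k hk)

theorem exists_nonneg_support_ssubset_of_not_linearIndepOn {l : ι → 𝕜} (hl : 0 ≤ l)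
    (hdep : ¬ LinearIndepOn 𝕜 v (support l)) :
    ∃ l' : ι → 𝕜, 0 ≤ l' ∧ support l' ⊂ support l ∧ ∑ i, l' i • v i = ∑ i, l i • v i := by
  obtain ⟨g, hgl, hg0, hg⟩ : ∃ g : ι → 𝕜, support g ⊆ support l ∧ ∑ i, g i • v i = 0 ∧
      ∃ j, 0 < g j := by
    simp only [linearIndepOn_iff_of_fintype, not_forall] at hdep
    obtain ⟨g, hgl, hg0, hne⟩ := hdep
    obtain ⟨j, hj⟩ := Function.ne_iff.1 hne
    rcases (hj : g j ≠ 0).lt_or_gt with hneg | hpos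
    · exact ⟨-g, by simpa using hgl, by simp [hg0], j, by simpa using hneg⟩
    · exact ⟨g, hgl, hg0, j, hpos⟩
  obtain ⟨j, hj⟩ := hg
  obtain ⟨t, hnn, i, hi, hzero⟩ := exists_nonneg_sub_smul_eq_zero hl hj
  have hsub : support (l - t • g) ⊆ support l := fun k hk => by
    by_contra hlk
    have hgk : g k = 0 := by_contra fun h => hlk (hgl h)
    simp_all
  refine ⟨l - t • g, hnn, ssubset_of_subset_not_subset hsub fun h => h (hgl hi.ne') hzero, ?_⟩
  simp [sub_smul, Finset.sum_sub_distrib, mul_smul, ← Finset.smul_sum, hg0]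

/-- Carathéodory's theorem for cones. -/
theorem exists_nonneg_linearIndepOn_support (l : ι → 𝕜) (hl : 0 ≤ l) :
    ∃ μ : ι → 𝕜, 0 ≤ μ ∧ support μ ⊆ support l ∧ LinearIndepOn 𝕜 v (support μ) ∧
      ∑ i, μ i • v i = ∑ i, l i • v i := by
  induction h : (support l).ncard using Nat.strong_induction_on generalizing l with
  | _ k ih =>
    by_cases hind : LinearIndepOn 𝕜 v (support l)
    · exact ⟨l, hl, subset_rfl, hind, rfl⟩
    obtain ⟨l', hl', hss, hsum⟩ := exists_nonneg_support_ssubset_of_not_linearIndepOn hl hind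
    obtain ⟨μ, hμ, hμl, hμind, hμsum⟩ :=
      ih _ (h ▸ Set.ncard_lt_ncard hss (toFinite _)) l' hl' rfl
    exact ⟨μ, hμ, hμl.trans hss.subset, hμind, hμsum.trans hsum⟩

end OrderedField

section Normed

variable {ι H : Type*} [Fintype ι] [NormedAddCommGroup H] [NormedSpace ℝ H]

theorem isClosed_hull_range_of_linearIndependent {v : ι → H} (hv : LinearIndependent ℝ v) :
    IsClosed (PointedCone.hull ℝ (range v) : Set H) := by
  have hcone : (PointedCone.hull ℝ (range v) : Set H) = Fintype.linearCombination ℝ v '' Ici 0 := by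
    ext x
    simp [PointedCone.mem_hull_range_iff, Fintype.linearCombination_apply]
  rw [hcone]
  exact (LinearMap.isClosedEmbedding_of_injective (LinearMap.ker_eq_bot.2
    (linearIndependent_iff_injective_fintypeLinearCombination.1 hv))).isClosedMap _ isClosed_Ici

theorem isClosed_hull_range [FiniteDimensional ℝ H] (v : ι → H) :
    IsClosed (PointedCone.hull ℝ (range v) : Set H) := by
  classical
  have hcone : (PointedCone.hull ℝ (range v) : Set H) =
      ⋃ (s : Set ι) (_ : LinearIndepOn ℝ v s), PointedCone.hull ℝ (range fun i : s => v i) := by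
    refine subset_antisymm (fun x hx => ?_) (iUnion₂_subset fun s _ =>
      Submodule.span_mono (range_comp_subset_range _ _))
    obtain ⟨l, hl, rfl⟩ := PointedCone.mem_hull_range_iff.1 hx
    obtain ⟨μ, hμ, -, hind, hμsum⟩ := exists_nonneg_linearIndepOn_support (v := v) l hl
    refine mem_iUnion₂.2 ⟨support μ, hind, PointedCone.mem_hull_range_iff.2
      ⟨fun i => μ i, fun i => hμ i, ?_⟩⟩
    rw [← hμsum, Finset.sum_set_coe (f := fun i => μ i • v i)]
    exact Finset.sum_subset (Finset.subset_univ _) fun i _ hi => by simp_all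
  rw [hcone]
  exact isClosed_iUnion_of_finite fun s => isClosed_iUnion_of_finite fun hs =>
    isClosed_hull_range_of_linearIndependent hs

end Normed

section InnerProduct

variable {ι H : Type*} [Fintype ι] [NormedAddCommGroup H] [InnerProductSpace ℝ H]
  {v : ι → H} {c : H} {d : ι → ℝ}

/-- Farkas' lemma. -/
theorem mem_hull_range_of_forall_inner_nonneg [FiniteDimensional ℝ H] {u : H}
    (h : ∀ w, (∀ i, 0 ≤ ⟪v i, w⟫_ℝ) → 0 ≤ ⟪u, w⟫_ℝ) : u ∈ PointedCone.hull ℝ (range v) := by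
  by_contra hu
  obtain ⟨w, hw, hwu⟩ :=
    ProperCone.hyperplane_separation' ⟨PointedCone.hull ℝ (range v), isClosed_hull_range v⟩ hu
  exact hwu.not_ge (h w fun i => hw _ (PointedCone.subset_hull (mem_range_self i)))

theorem exists_pos_forall_inner_add_smul_le {x w : H} (hx : ∀ i, ⟪v i, x⟫_ℝ ≤ d i)
    (hw : ∀ i, ⟪v i, x⟫_ℝ = d i → ⟪v i, w⟫_ℝ ≤ 0) :
    ∃ t : ℝ, 0 < t ∧ ∀ i, ⟪v i, x + t • w⟫_ℝ ≤ d i := by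
  have : ∀ᶠ t in 𝓝[>] (0 : ℝ), ∀ i, ⟪v i, x + t • w⟫_ℝ ≤ d i := by
    refine eventually_all.2 fun i => ?_
    rcases (hx i).eq_or_lt with hact | hslack
    · filter_upwards [self_mem_nhdsWithin] with t (ht : 0 < t)
      rw [inner_add_right, real_inner_smul_right, hact]
      nlinarith [hw i hact]
    · have hcont : Continuous fun t : ℝ => ⟪v i, x + t • w⟫_ℝ := by fun_prop
      refine Tendsto.eventually_le_const hslack ?_
      simpa using (hcont.tendsto 0).mono_left nhdsWithin_le_nhds
  obtain ⟨t, hfeas, ht⟩ := (this.and self_mem_nhdsWithin).exists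
  exact ⟨t, ht, hfeas⟩

theorem exists_kkt_of_isMinOn [FiniteDimensional ℝ H] {x : H} (hx : ∀ i, ⟪v i, x⟫_ℝ ≤ d i)
    (hmin : IsMinOn (⟪c, ·⟫_ℝ) {z | ∀ i, ⟪v i, z⟫_ℝ ≤ d i} x) :
    ∃ l : ι → ℝ, 0 ≤ l ∧ ∑ i, l i • v i = -c ∧ ∀ i, l i ≠ 0 → ⟪v i, x⟫_ℝ = d i := by
  set I := {i | ⟪v i, x⟫_ℝ = d i}
  have hc : -c ∈ PointedCone.hull ℝ (range (I.indicator v)) := by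
    refine mem_hull_range_of_forall_inner_nonneg fun w hw => ?_
    by_contra! hcw
    obtain ⟨t, ht, hfeas⟩ := exists_pos_forall_inner_add_smul_le hx (w := -w) fun i hi => by
      simpa [inner_neg_right, I, hi] using hw i
    have := isMinOn_iff.1 hmin _ hfeas
    rw [inner_add_right, real_inner_smul_right, inner_neg_right] at this
    rw [inner_neg_left] at hcw
    nlinarith
  obtain ⟨l, hl, hsum⟩ := PointedCone.mem_hull_range_iff.1 hc
  refine ⟨I.indicator l, indicator_nonneg fun i _ => hl i, ?_, fun i hi =>
    (mem_of_indicator_ne_zero hi : i ∈ I)⟩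
  rw [← hsum]
  refine Finset.sum_congr rfl fun i _ => ?_
  by_cases hi : i ∈ I <;> simp [hi]

theorem inner_eq_neg_sum_mul_inner {l : ι → ℝ} (hl : ∑ i, l i • v i = -c) (z : H) :
    ⟪c, z⟫_ℝ = -∑ i, l i * ⟪v i, z⟫_ℝ := by
  rw [← neg_neg c, inner_neg_left, ← hl, sum_inner]
  simp only [real_inner_smul_left]

/-- Weak duality. -/
theorem neg_dotProduct_le_inner {l : ι → ℝ} (hl : 0 ≤ l) (hlc : ∑ i, l i • v i = -c) {z : H}
    (hz : ∀ i, ⟪v i, z⟫_ℝ ≤ d i) : -(l ⬝ᵥ d) ≤ ⟪c, z⟫_ℝ := by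
  rw [inner_eq_neg_sum_mul_inner hlc, neg_le_neg_iff]
  exact Finset.sum_le_sum fun i _ => mul_le_mul_of_nonneg_left (hz i) (hl i)

theorem neg_dotProduct_eq_inner {l : ι → ℝ} (hlc : ∑ i, l i • v i = -c) {z : H}
    (hz : ∀ i, l i ≠ 0 → ⟪v i, z⟫_ℝ = d i) : -(l ⬝ᵥ d) = ⟪c, z⟫_ℝ := by
  rw [inner_eq_neg_sum_mul_inner hlc, dotProduct]
  congr 1
  refine Finset.sum_congr rfl fun i _ => ?_
  by_cases hi : l i = 0 <;> simp [hi, hz]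

variable (v c) in
/-- The basic feasible solutions of the dual program: maximise `-(l ⬝ᵥ d)` subject to `0 ≤ l` and
`∑ i, l i • v i = -c`. -/
def basicDualFeasible : Set (ι → ℝ) :=
  {l | 0 ≤ l ∧ ∑ i, l i • v i = -c ∧ LinearIndepOn ℝ v (support l)}

/-- Strong duality: the dual optimum is attained at a basic feasible solution. -/
theorem isGreatest_basicDualFeasible_of_isLeast [FiniteDimensional ℝ H] {J : ℝ}
    (hJ : IsLeast ((⟪c, ·⟫_ℝ) '' {z | ∀ i, ⟪v i, z⟫_ℝ ≤ d i}) J) :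
    IsGreatest ((fun l => -(l ⬝ᵥ d)) '' basicDualFeasible v c) J := by
  obtain ⟨⟨x, hx, rfl⟩, hmin⟩ := hJ
  obtain ⟨l, hl, hlc, hslack⟩ :=
    exists_kkt_of_isMinOn hx (isMinOn_iff.2 fun z hz => hmin (mem_image_of_mem _ hz))
  obtain ⟨μ, hμ, hμl, hind, hμsum⟩ := exists_nonneg_linearIndepOn_support (v := v) l hl
  refine ⟨⟨μ, ⟨hμ, hμsum.trans hlc, hind⟩, neg_dotProduct_eq_inner (hμsum.trans hlc)
    fun i hi => hslack i (hμl hi)⟩, ?_⟩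
  rintro _ ⟨l', ⟨hl', hl'c, -⟩, rfl⟩
  exact neg_dotProduct_le_inner hl' hl'c hx

end InnerProduct

theorem image_inner_setOf_inner_le_eq {ι κ : Type*} [Fintype κ] (A : Matrix ι κ ℝ) (c : κ → ℝ)
    (d : ι → ℝ) :
    (⟪toLp 2 c, ·⟫_ℝ) '' {z : EuclideanSpace ℝ κ | ∀ i, ⟪toLp 2 (A i), z⟫_ℝ ≤ d i} =
      {r | ∃ x, (∀ i, (A *ᵥ x) i ≤ d i) ∧ r = c ⬝ᵥ x} := by
  have hinner (a x : κ → ℝ) : ⟪toLp 2 a, toLp 2 x⟫_ℝ = a ⬝ᵥ x := by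
    simp [EuclideanSpace.inner_toLp_toLp, dotProduct_comm]
  ext r
  constructor
  · rintro ⟨z, hz, rfl⟩
    exact ⟨ofLp z, fun i => by simpa [hinner, mulVec] using hz i, by simp [← hinner]⟩
  · rintro ⟨x, hx, rfl⟩
    exact ⟨toLp 2 x, fun i => by simpa [hinner, mulVec] using hx i, hinner c x⟩

theorem stmt_1_general (m n p : ℕ) (A : Matrix (Fin m) (Fin n) ℝ) (B : Matrix (Fin m) (Fin p) ℝ)
    (b : Fin m → ℝ) (c : Fin n → ℝ) (S : Set (Fin p → ℝ))
    (J : (Fin p → ℝ) → ℝ)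
    (hatt : ∀ y ∈ S,
      IsLeast {v : ℝ | ∃ x : Fin n → ℝ,
        (∀ i, A.mulVec x i ≤ b i + B.mulVec y i) ∧ v = c ⬝ᵥ x} (J y)) :
    ∃ F : Finset ((Fin p → ℝ) × ℝ), ∃ hF : F.Nonempty,
      ∀ y ∈ S, J y = F.sup' hF (fun q => q.1 ⬝ᵥ y + q.2) := by
  classical
  rcases S.eq_empty_or_nonempty with rfl | ⟨y₀, hy₀⟩
  · exact ⟨{0}, Finset.singleton_nonempty 0, by simp⟩
  set Λ := basicDualFeasible (fun i => toLp 2 (A i)) (toLp 2 c)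
  have hΛ : Λ.Finite := (finite_setOf_sum_smul_eq_linearIndepOn_support _ (-toLp 2 c)).subset
    fun l hl => ⟨hl.2.1, hl.2.2⟩
  have hJ (y) (hy : y ∈ S) : IsGreatest ((fun l => -(l ⬝ᵥ (b + B *ᵥ y))) '' Λ) (J y) :=
    isGreatest_basicDualFeasible_of_isLeast (by rw [image_inner_setOf_inner_le_eq]; exact hatt y hy)
  have haffine (l : Fin m → ℝ) (y : Fin p → ℝ) :
      -(l ᵥ* B) ⬝ᵥ y + -(l ⬝ᵥ b) = -(l ⬝ᵥ (b + B *ᵥ y)) := by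
    rw [dotProduct_add, dotProduct_mulVec, neg_dotProduct]
    ring
  obtain ⟨l₀, hl₀, -⟩ := (hJ y₀ hy₀).1
  refine ⟨hΛ.toFinset.image fun l => (-(l ᵥ* B), -(l ⬝ᵥ b)),
    ⟨_, Finset.mem_image_of_mem _ (hΛ.mem_toFinset.2 hl₀)⟩, fun y hy => ?_⟩
  obtain ⟨⟨l, hl, hlJ⟩, hle⟩ := hJ y hy
  refine le_antisymm ?_ (Finset.sup'_le _ _ fun q hq => ?_)
  · exact Finset.le_sup'_of_le _ (Finset.mem_image_of_mem _ (hΛ.mem_toFinset.2 hl))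
      ((haffine l y).trans hlJ).ge
  · obtain ⟨l', hl', rfl⟩ := Finset.mem_image.1 hq
    rw [haffine]
    exact hle ⟨l', hΛ.mem_toFinset.1 hl', rfl⟩

/-- Piecewise-affine structure of the optimal value of a right-hand-side multiparametric
linear program (piecewise-affine part of Lemma 1): the optimal value is a pointwise
maximum of finitely many affine functions of the parameter. -/
theorem stmt_1 (m n p : ℕ) (A : Matrix (Fin m) (Fin n) ℝ) (B : Matrix (Fin m) (Fin p) ℝ)
    (b : Fin m → ℝ) (c : Fin n → ℝ) (S : Set (Fin p → ℝ))
    (J : (Fin p → ℝ) → ℝ)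
    (hfeas : ∀ y ∈ S, ∃ x : Fin n → ℝ, ∀ i, A.mulVec x i ≤ b i + B.mulVec y i)
    (hatt : ∀ y ∈ S,
      IsLeast {v : ℝ | ∃ x : Fin n → ℝ,
        (∀ i, A.mulVec x i ≤ b i + B.mulVec y i) ∧ v = c ⬝ᵥ x} (J y)) :
    ∃ F : Finset ((Fin p → ℝ) × ℝ), ∃ hF : F.Nonempty,
      ∀ y ∈ S, J y = F.sup' hF (fun q => q.1 ⬝ᵥ y + q.2) :=
  stmt_1_general m n p A B b c S J hatt
end

section
/- Let α_1, …, α_ℓ ∈ ℝ^n with ℓ ≥ 1, let N ⊆ ℝ^n be a closed convex cone, and let v* be the minimum-Euclidean-norm element of conv{α_1, …, α_ℓ} + N; assume v* ≠ 0. Let y* ∈ ℝ^n, let ε > 0, and for each j = 1, …, ℓ let P_j ⊆ ℝ^n be a set containing y* on which y* minimizes the linear function z ↦ ⟨α_j, z⟩, i.e., ⟨α_j, y*⟩ ≤ ⟨α_j, z⟩ for all z ∈ P_j. Then y* − ε v* ∉ P_j for every j = 1, …, ℓ. -/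
/-!
Since `v*` is the projection of `0` onto the convex set `conv{α_j} + N`, which contains every
`α_j`, the obtuse-angle criterion gives `⟪α_j, v*⟫ ≥ ‖v*‖² > 0`. Hence `z ↦ ⟪α_j, z⟫` strictly
decreases from `y*` along `-v*`, whereas `y*` minimizes it on `P_j`.
-/

open scoped InnerProductSpace Pointwise

section MinNormElement

variable {F : Type*} [NormedAddCommGroup F] [InnerProductSpace ℝ F]

theorem Convex.norm_sq_le_inner_of_forall_norm_le {K : Set F} (hK : Convex ℝ K) {v : F}
    (hv : v ∈ K) (hmin : ∀ u ∈ K, ‖v‖ ≤ ‖u‖) {u : F} (hu : u ∈ K) : ‖v‖ ^ 2 ≤ ⟪v, u⟫_ℝ := by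
  have hproj : ‖0 - v‖ = ⨅ w : K, ‖0 - (w : F)‖ := by
    refine le_antisymm ?_ ?_
    · have : Nonempty K := ⟨⟨v, hv⟩⟩
      exact le_ciInf fun w => by simpa using hmin w w.2
    · exact ciInf_le ⟨0, Set.forall_mem_range.2 fun _ => norm_nonneg _⟩ (⟨v, hv⟩ : K)
  have := (norm_eq_iInf_iff_real_inner_le_zero hK hv).1 hproj u hu
  rw [zero_sub, inner_neg_left, inner_sub_right, real_inner_self_eq_norm_sq] at this
  linarith

theorem real_inner_sub_smul_lt {a v : F} (y : F) {ε : ℝ} (hε : 0 < ε) (hav : 0 < ⟪a, v⟫_ℝ) :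
    ⟪a, y - ε • v⟫_ℝ < ⟪a, y⟫_ℝ := by
  rw [inner_sub_right, real_inner_smul_right]
  linarith [mul_pos hε hav]

end MinNormElement

theorem stmt_7_general (n ℓ : ℕ) (α : Fin ℓ → EuclideanSpace ℝ (Fin n))
    (N : Set (EuclideanSpace ℝ (Fin n)))
    (hN0 : (0 : EuclideanSpace ℝ (Fin n)) ∈ N)
    (hNconvex : Convex ℝ N)
    (S : Set (EuclideanSpace ℝ (Fin n)))
    (hS : S = {v | ∃ a ∈ convexHull ℝ (Set.range α), ∃ ζ ∈ N, v = a + ζ})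
    (vstar : EuclideanSpace ℝ (Fin n))
    (hvS : vstar ∈ S) (hvmin : ∀ u ∈ S, ‖vstar‖ ≤ ‖u‖) (hvne : vstar ≠ 0)
    (ystar : EuclideanSpace ℝ (Fin n)) (ε : ℝ) (hε : 0 < ε)
    (P : Fin ℓ → Set (EuclideanSpace ℝ (Fin n)))
    (hymin : ∀ j, ∀ z ∈ P j, (inner ℝ (α j) ystar : ℝ) ≤ (inner ℝ (α j) z : ℝ)) :
    ∀ j : Fin ℓ, ystar - ε • vstar ∉ P j := by
  intro j hj
  have hS_eq : S = convexHull ℝ (Set.range α) + N := by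
    ext v
    simp only [hS, Set.mem_ofPred_eq, Set.mem_add, eq_comm]
  have hSconvex : Convex ℝ S := hS_eq ▸ (convex_convexHull ℝ _).add hNconvex
  have hαS : α j ∈ S :=
    hS_eq ▸ Set.mem_add.2 ⟨α j, subset_convexHull ℝ _ ⟨j, rfl⟩, 0, hN0, add_zero _⟩
  have hprogress : 0 < ⟪α j, vstar⟫_ℝ := by
    rw [real_inner_comm]
    exact (pow_pos (norm_pos_iff.2 hvne) 2).trans_le
      (hSconvex.norm_sq_le_inner_of_forall_norm_le hvS hvmin hαS)
  exact (real_inner_sub_smul_lt ystar hε hprogress).not_ge (hymin j _ hj)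

/-- Progress step in the proof of Theorem 1: if the minimum-norm element `v*` of
`conv{α₁,…,α_ℓ} + N` is nonzero, then for any step size `ε > 0`, the point `y* − ε v*`
leaves every region `P_j` containing `y*` on which `y*` minimizes `z ↦ ⟨α_j, z⟩`. -/
theorem stmt_7 (n ℓ : ℕ) (hℓ : 1 ≤ ℓ) (α : Fin ℓ → EuclideanSpace ℝ (Fin n))
    (N : Set (EuclideanSpace ℝ (Fin n)))
    (hN0 : (0 : EuclideanSpace ℝ (Fin n)) ∈ N)
    (hNclosed : IsClosed N) (hNconvex : Convex ℝ N)
    (hNcone : ∀ t : ℝ, 0 ≤ t → ∀ ζ ∈ N, t • ζ ∈ N)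
    (S : Set (EuclideanSpace ℝ (Fin n)))
    (hS : S = {v | ∃ a ∈ convexHull ℝ (Set.range α), ∃ ζ ∈ N, v = a + ζ})
    (vstar : EuclideanSpace ℝ (Fin n))
    (hvS : vstar ∈ S) (hvmin : ∀ u ∈ S, ‖vstar‖ ≤ ‖u‖) (hvne : vstar ≠ 0)
    (ystar : EuclideanSpace ℝ (Fin n)) (ε : ℝ) (hε : 0 < ε)
    (P : Fin ℓ → Set (EuclideanSpace ℝ (Fin n)))
    (hyP : ∀ j, ystar ∈ P j)
    (hymin : ∀ j, ∀ z ∈ P j, (inner ℝ (α j) ystar : ℝ) ≤ (inner ℝ (α j) z : ℝ)) :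
    ∀ j : Fin ℓ, ystar - ε • vstar ∉ P j :=
  stmt_7_general n ℓ α N hN0 hNconvex S hS vstar hvS hvmin hvne ystar ε hε P hymin
end

section
/- Let A be an m×n real matrix, C an m×p real matrix, b ∈ ℝ^m and c ∈ ℝ^n. Let l, u ∈ ℝ^p with l ≤ u componentwise and let B = { ξ ∈ ℝ^p : l ≤ ξ ≤ u }. Suppose that for every ξ ∈ B the feasible set {x ∈ ℝ^n : A x ≤ b + C ξ} is nonempty and the infimum J(ξ) := inf { ⟨c, x⟩ : A x ≤ b + C ξ } is attained. Then there exists w ∈ {0,1}^p such that the vertex ξ_w of B defined by (ξ_w)_i = l_i + w_i (u_i − l_i) satisfies J(ξ) ≤ J(ξ_w) for all ξ ∈ B. -/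
open Matrix

/-- The optimal value of a right-hand-side parametric linear program, maximized over a
box of parameters, attains its maximum at a vertex of the box (structural core of
Lemma 2). -/
theorem stmt_9 (m n p : ℕ) (A : Matrix (Fin m) (Fin n) ℝ) (C : Matrix (Fin m) (Fin p) ℝ)
    (b : Fin m → ℝ) (c : Fin n → ℝ) (l u : Fin p → ℝ) (hlu : ∀ i, l i ≤ u i)
    (B : Set (Fin p → ℝ)) (hB : B = {ξ | ∀ i, l i ≤ ξ i ∧ ξ i ≤ u i})
    (J : (Fin p → ℝ) → ℝ)
    (hfeas : ∀ ξ ∈ B, ∃ x : Fin n → ℝ, ∀ i, A.mulVec x i ≤ b i + C.mulVec ξ i)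
    (hatt : ∀ ξ ∈ B,
      IsLeast {v : ℝ | ∃ x : Fin n → ℝ,
        (∀ i, A.mulVec x i ≤ b i + C.mulVec ξ i) ∧ v = c ⬝ᵥ x} (J ξ)) :
    ∃ w : Fin p → ℝ, (∀ i, w i = 0 ∨ w i = 1) ∧
      ∀ ξ ∈ B, J ξ ≤ J (fun i => l i + w i * (u i - l i)) := by
  classical
  subst hB
  set S : Set (Fin p → ℝ) := {ξ | ∀ i, l i ≤ ξ i ∧ ξ i ≤ u i} with hS
  -- Convexity of J on the box
  have hconv : ∀ ξ1 ∈ S, ∀ ξ2 ∈ S, ∀ t : ℝ, 0 ≤ t → t ≤ 1 →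
      (t • ξ1 + (1 - t) • ξ2) ∈ S ∧
      J (t • ξ1 + (1 - t) • ξ2) ≤ t * J ξ1 + (1 - t) * J ξ2 := by
    intro ξ1 h1 ξ2 h2 t ht0 ht1
    have ht1' : (0:ℝ) ≤ 1 - t := by linarith
    have hmem : (t • ξ1 + (1 - t) • ξ2) ∈ S := by
      intro i
      simp only [Pi.add_apply, Pi.smul_apply, smul_eq_mul]
      constructor
      · nlinarith [(h1 i).1, (h2 i).1]
      · nlinarith [(h1 i).2, (h2 i).2]
    refine ⟨hmem, ?_⟩
    obtain ⟨x1, hx1f, hx1v⟩ := (hatt ξ1 h1).1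
    obtain ⟨x2, hx2f, hx2v⟩ := (hatt ξ2 h2).1
    apply (hatt _ hmem).2
    refine ⟨t • x1 + (1 - t) • x2, ?_, ?_⟩
    · intro i
      have e1 : A.mulVec (t • x1 + (1 - t) • x2) i
          = t * A.mulVec x1 i + (1 - t) * A.mulVec x2 i := by
        simp [Matrix.mulVec_add, Matrix.mulVec_smul]
      have e2 : C.mulVec (t • ξ1 + (1 - t) • ξ2) i
          = t * C.mulVec ξ1 i + (1 - t) * C.mulVec ξ2 i := by
        simp [Matrix.mulVec_add, Matrix.mulVec_smul]
      rw [e1, e2]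
      have h1' := hx1f i
      have h2' := hx2f i
      nlinarith
    · rw [hx1v, hx2v]
      simp [dotProduct_add, dotProduct_smul, smul_eq_mul]
  -- vertices
  set vert : (Fin p → Bool) → (Fin p → ℝ) := fun w i => if w i then u i else l i with hvert
  have hne : (Finset.univ : Finset (Fin p → Bool)).Nonempty := Finset.univ_nonempty
  set M : ℝ := Finset.univ.sup' hne (fun w => J (vert w)) with hM
  -- key induction
  have key : ∀ k : ℕ, ∀ ξ, ξ ∈ S → (∀ i : Fin p, k ≤ i.val → ξ i = l i ∨ ξ i = u i) →
      J ξ ≤ M := by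
    intro k
    induction k with
    | zero =>
      intro ξ hmem hend
      have hξ : ξ = vert (fun i => decide (ξ i = u i)) := by
        funext i
        simp only [hvert]
        by_cases hu : ξ i = u i
        · simp [hu]
        · have hd : decide (ξ i = u i) = false := by simp [hu]
          simp only [hd, Bool.false_eq_true, if_false]
          rcases hend i (Nat.zero_le _) with h | h
          · exact h
          · exact absurd h hu
      rw [hξ]
      exact Finset.le_sup' (fun w => J (vert w)) (Finset.mem_univ _)
    | succ k ih =>
      intro ξ hmem hend
      by_cases hk : k < p
      · set j : Fin p := ⟨k, hk⟩ with hj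
        have hjk : (j : ℕ) = k := rfl
        set ξl : Fin p → ℝ := Function.update ξ j (l j) with hξl
        set ξu : Fin p → ℝ := Function.update ξ j (u j) with hξu
        have hmeml : ξl ∈ S := by
          intro i
          by_cases h : i = j
          · rw [hξl, h, Function.update_self]
            exact ⟨le_refl _, hlu j⟩
          · rw [hξl, Function.update_of_ne h]
            exact hmem i
        have hmemu : ξu ∈ S := by
          intro i
          by_cases h : i = j
          · rw [hξu, h, Function.update_self]
            exact ⟨hlu j, le_refl _⟩
          · rw [hξu, Function.update_of_ne h]
            exact hmem i
        have hendl : ∀ i : Fin p, k ≤ i.val → ξl i = l i ∨ ξl i = u i := by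
          intro i hi
          by_cases h : i = j
          · left; rw [hξl, h, Function.update_self]
          · have hik : k + 1 ≤ i.val := by
              rcases Nat.lt_or_ge i.val (k+1) with h' | h'
              · exact absurd (Fin.ext (by omega : i.val = (j : ℕ))) h
              · exact h'
            rw [hξl, Function.update_of_ne h]
            exact hend i hik
        have hendu : ∀ i : Fin p, k ≤ i.val → ξu i = l i ∨ ξu i = u i := by
          intro i hi
          by_cases h : i = j
          · right; rw [hξu, h, Function.update_self]
          · have hik : k + 1 ≤ i.val := by
              rcases Nat.lt_or_ge i.val (k+1) with h' | h'
              · exact absurd (Fin.ext (by omega : i.val = (j : ℕ))) h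
              · exact h'
            rw [hξu, Function.update_of_ne h]
            exact hend i hik
        set t : ℝ := if u j = l j then 0 else (ξ j - l j) / (u j - l j) with ht
        have ht0 : 0 ≤ t := by
          rw [ht]; split
          · exact le_refl 0
          · rename_i h
            have hlt : l j < u j := lt_of_le_of_ne (hlu j) (Ne.symm h)
            exact div_nonneg (by linarith [(hmem j).1]) (by linarith)
        have ht1 : t ≤ 1 := by
          rw [ht]; split
          · norm_num
          · rename_i h
            have hlt : l j < u j := lt_of_le_of_ne (hlu j) (Ne.symm h)
            rw [div_le_one (by linarith)]
            linarith [(hmem j).2]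
        have hξeq : ξ = t • ξu + (1 - t) • ξl := by
          funext i
          simp only [Pi.add_apply, Pi.smul_apply, smul_eq_mul]
          by_cases h : i = j
          · rw [h, hξu, hξl, Function.update_self, Function.update_self, ht]
            split
            · rename_i h'
              have h1 := (hmem j).1
              have h2 := (hmem j).2
              rw [h'] at h2
              have hx : ξ j = l j := le_antisymm h2 h1
              rw [hx]; ring
            · rename_i h'
              have hC : u j - l j ≠ 0 := sub_ne_zero.mpr h'
              field_simp
              ring
          · rw [hξu, hξl, Function.update_of_ne h, Function.update_of_ne h]
            ring
        have hcv := hconv ξu hmemu ξl hmeml t ht0 ht1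
        rw [hξeq]
        calc J (t • ξu + (1 - t) • ξl) ≤ t * J ξu + (1 - t) * J ξl := hcv.2
          _ ≤ t * M + (1 - t) * M := by
              have h1 := ih ξu hmemu hendu
              have h2 := ih ξl hmeml hendl
              nlinarith
          _ = M := by ring
      · apply ih ξ hmem
        intro i hi
        exact absurd i.isLt (by omega)
  -- pick the maximizing vertex
  obtain ⟨w, -, hw⟩ := Finset.exists_mem_eq_sup' hne (fun w => J (vert w))
  refine ⟨fun i => if w i then 1 else 0, fun i => by by_cases h : w i <;> simp [h], ?_⟩
  intro ξ hmem
  have hveq : (fun i => l i + (if w i then (1:ℝ) else 0) * (u i - l i)) = vert w := by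
    funext i
    simp only [hvert]
    by_cases h : w i <;> simp [h] <;> ring
  rw [hveq, ← hw, ← hM]
  exact key p ξ hmem (fun i hi => absurd i.isLt (by omega))
end

section
/- Let K ⊆ ℝ^n be a nonempty compact convex set and let c ∈ ℝ^n. Let M = { y ∈ K : ⟨c, y⟩ ≤ ⟨c, z⟩ for all z ∈ K } be the set of minimizers of the linear functional ⟨c, ·⟩ over K, and suppose y₀ ∈ M satisfies y₀ ≤_lex y for every y ∈ M, where ≤_lex denotes the lexicographic order on ℝ^n. Then y₀ is an extreme point of K. -/
/-!
The minimizers of a linear functional over `K` form a face of `K`, so an extreme point of that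
face is an extreme point of `K`. Inside the face, the lexicographic minimum is extreme because the
lexicographic order on `ℝⁿ` is compatible with addition and with multiplication by positive
scalars: if `y₀ = a x₁ + b x₂` with `y₀ ≤ x₁, x₂` and `y₀ < x₁`, then `y₀ < a x₁ + b x₂ = y₀`.
-/

open Matrix

instance Pi.Lex.posSMulStrictMono {𝕜 ι : Type*} {β : ι → Type*} [LinearOrder ι] [Zero 𝕜]
    [Preorder 𝕜] [∀ i, PartialOrder (β i)] [∀ i, SMul 𝕜 (β i)] [∀ i, PosSMulStrictMono 𝕜 (β i)] :
    PosSMulStrictMono 𝕜 (Lex (∀ i, β i)) where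
  smul_lt_smul_of_pos_left a ha _ _ := fun ⟨i, hj, hi⟩ ↦
    ⟨i, fun j hji ↦ congrArg (a • ·) (hj j hji), smul_lt_smul_of_pos_left hi ha⟩

theorem IsLeast.mem_extremePoints {𝕜 E : Type*} [Semiring 𝕜] [PartialOrder 𝕜] [IsOrderedRing 𝕜]
    [AddCommMonoid E] [PartialOrder E] [IsOrderedCancelAddMonoid E] [Module 𝕜 E]
    [PosSMulStrictMono 𝕜 E] {A : Set E} {x : E} (h : IsLeast A x) : x ∈ A.extremePoints 𝕜 := by
  refine ⟨h.1, fun x₁ hx₁ x₂ hx₂ ⟨a, b, ha, hb, hab, hx⟩ ↦ ?_⟩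
  by_contra hne
  have hlt : x < x₁ := (h.2 hx₁).lt_of_ne (Ne.symm hne)
  have : x < x := calc
    x = a • x + b • x := by rw [← add_smul, hab, one_smul]
    _ < a • x₁ + b • x₂ := add_lt_add_of_lt_of_le (smul_lt_smul_of_pos_left hlt ha)
      (smul_le_smul_of_nonneg_left (h.2 hx₂) hb.le)
    _ = x := hx
  exact this.false

theorem mem_extremePoints_of_forall_toLex_le {𝕜 ι : Type*} [Ring 𝕜] [PartialOrder 𝕜]
    [IsStrictOrderedRing 𝕜] [LinearOrder ι] {A : Set (ι → 𝕜)} {x : ι → 𝕜} (hx : x ∈ A)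
    (h : ∀ y ∈ A, toLex x ≤ toLex y) : x ∈ A.extremePoints 𝕜 := by
  have hleast : IsLeast (toLexLinearEquiv 𝕜 (ι → 𝕜) '' A) (toLex x) :=
    ⟨Set.mem_image_of_mem _ hx, Set.forall_mem_image.2 h⟩
  have hext := hleast.mem_extremePoints (𝕜 := 𝕜)
  rw [← image_extremePoints] at hext
  exact (toLexLinearEquiv 𝕜 (ι → 𝕜)).injective.mem_set_image.1 hext

theorem LinearMap.isExtreme_setOf_forall_apply_le {𝕜 E : Type*} [Semiring 𝕜] [LinearOrder 𝕜]
    [IsStrictOrderedRing 𝕜] [AddCommMonoid E] [Module 𝕜 E] (f : E →ₗ[𝕜] 𝕜) (A : Set E) :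
    IsExtreme 𝕜 A {x ∈ A | ∀ y ∈ A, f x ≤ f y} := by
  refine ⟨Set.sep_subset _ _, fun x₁ hx₁ x₂ hx₂ x hx hseg ↦ ⟨hx₁, fun y hy ↦ ?_⟩⟩
  calc f x₁ ≤ f x := (f.concaveOn convex_univ).left_le_of_le_right (Set.mem_univ _)
        (Set.mem_univ _) hseg (hx.2 x₂ hx₂)
    _ ≤ f y := hx.2 y hy

theorem stmt_15_general (n : ℕ) (K : Set (Fin n → ℝ)) (c : Fin n → ℝ)
    (M : Set (Fin n → ℝ)) (hM : M = {y ∈ K | ∀ z ∈ K, c ⬝ᵥ y ≤ c ⬝ᵥ z})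
    (y₀ : Fin n → ℝ) (hy₀ : y₀ ∈ M)
    (hlex : ∀ y ∈ M, y = y₀ ∨ ∃ i : Fin n, (∀ j < i, y₀ j = y j) ∧ y₀ i < y i) :
    y₀ ∈ Set.extremePoints ℝ K := by
  have hface : IsExtreme ℝ K M :=
    hM ▸ (dotProductEquiv ℝ (Fin n) c).isExtreme_setOf_forall_apply_le K
  refine hface.extremePoints_subset_extremePoints
    (mem_extremePoints_of_forall_toLex_le hy₀ fun y hy ↦ ?_)
  -- the second disjunct of `hlex y hy` is `toLex y₀ < toLex y` unfolded
  exact le_iff_lt_or_eq.2 ((hlex y hy).symm.imp id Eq.symm)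

/-- The lexicographically smallest minimizer of a linear functional over a nonempty
compact convex set is an extreme point of that set (the "lexicographically smallest
optimizer is a vertex" property used in Theorem 1). -/
theorem stmt_15 (n : ℕ) (K : Set (Fin n → ℝ)) (hne : K.Nonempty)
    (hcomp : IsCompact K) (hconv : Convex ℝ K) (c : Fin n → ℝ)
    (M : Set (Fin n → ℝ)) (hM : M = {y ∈ K | ∀ z ∈ K, c ⬝ᵥ y ≤ c ⬝ᵥ z})
    (y₀ : Fin n → ℝ) (hy₀ : y₀ ∈ M)
    (hlex : ∀ y ∈ M, y = y₀ ∨ ∃ i : Fin n, (∀ j < i, y₀ j = y j) ∧ y₀ i < y i) :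
    y₀ ∈ Set.extremePoints ℝ K :=
  stmt_15_general n K c M hM y₀ hy₀ hlex
end
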